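/- Let q ∈ ℂ[x] be irreducible, τ ∈ ℂ[x], and let 𝔄^∨ := {T ∈ A_n(ℂ) : T ∘ τ(x) ∈ A_n(ℂ)·q(∂)} be the annihilator of e^∨ = τ + D·q(∂) in D/D·q(∂). Then the extension ideal 𝔄_τ^∨ := D_τ·𝔄^∨ in the localization D_τ of the Weyl algebra at τ is a principal left ideal, generated by D := τ(x) ∘ q(∂) ∘ τ(x)^{-1}. -/
import Mathlib

set_option maxHeartbeats 1000000
set_option synthInstance.maxHeartbeats 400000


open MvPolynomial

noncomputable section

/-- The polynomial ring `ℂ[x₁,…,xₙ]`. -/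
abbrev Rn (n : ℕ) : Type := MvPolynomial (Fin n) ℂ

/-- The localization `ℂ[x, τ⁻¹]` of `ℂ[x]` at `τ`, i.e. the regular functions on
`X_τ = ℂⁿ \ τ⁻¹(0)`. -/
abbrev Sloc (n : ℕ) (τ : Rn n) : Type := Localization.Away τ

/-- `ℂ`-linear endomorphisms of `ℂ[x, τ⁻¹]`; the localized Weyl algebra `D_τ` lives here. -/
abbrev ES (n : ℕ) (τ : Rn n) : Type := Module.End ℂ (Sloc n τ)

/-- Multiplication operator by `s ∈ ℂ[x, τ⁻¹]`. -/
def mulE {n : ℕ} {τ : Rn n} (s : Sloc n τ) : ES n τ := LinearMap.mulLeft ℂ s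

/-- The constant coefficient operator `q(∂)` built from a family `d` of (extended)
partial derivative operators. -/
def cOpE {n : ℕ} {τ : Rn n} (d : Fin n → ES n τ) (q : Rn n) : ES n τ :=
  ∑ m ∈ q.support, q.coeff m • ((List.finRange n).map (fun i => d i ^ m i)).prod

/-- The Darboux operator `D = τ(x) ∘ q(∂) ∘ τ(x)⁻¹`, where `t = τ⁻¹`. -/
def DarbouxOp {n : ℕ} (τ : Rn n) (d : Fin n → ES n τ) (q : Rn n) (t : Sloc n τ) : ES n τ :=
  mulE (algebraMap (Rn n) (Sloc n τ) τ) * cOpE d q * mulE t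

/-- The localized Weyl algebra `D_τ` as a subalgebra of `End ℂ (ℂ[x,τ⁻¹])`. -/
def DtauAlg {n : ℕ} {τ : Rn n} (d : Fin n → ES n τ) : Subalgebra ℂ (ES n τ) :=
  Algebra.adjoin ℂ (Set.range d ∪ Set.range (mulE (τ := τ)))

/-- The Weyl algebra `Aₙ(ℂ)` realized inside `End ℂ (ℂ[x,τ⁻¹])`. -/
def WeylInS {n : ℕ} {τ : Rn n} (d : Fin n → ES n τ) : Subalgebra ℂ (ES n τ) :=
  Algebra.adjoin ℂ
    (Set.range d ∪ Set.range (fun r : Rn n => mulE (algebraMap (Rn n) (Sloc n τ) r)))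

lemma mulE_memD {n : ℕ} {τ : Rn n} (d : Fin n → ES n τ) (s : Sloc n τ) :
    mulE s ∈ DtauAlg d :=
  Algebra.subset_adjoin (Set.mem_union_right _ (Set.mem_range_self s))

lemma cOpE_memD {n : ℕ} {τ : Rn n} (d : Fin n → ES n τ) (q : Rn n) :
    cOpE d q ∈ DtauAlg d := by
  apply Subalgebra.sum_mem
  intro m _
  apply Subalgebra.smul_mem
  apply Subalgebra.list_prod_mem
  intro x hx
  simp only [List.mem_map] at hx
  obtain ⟨i, -, rfl⟩ := hx
  exact pow_mem (Algebra.subset_adjoin (Set.mem_union_left _ (Set.mem_range_self i))) _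

lemma DarbouxOp_memD {n : ℕ} {τ : Rn n} (d : Fin n → ES n τ) (q : Rn n) (t : Sloc n τ) :
    DarbouxOp τ d q t ∈ DtauAlg d :=
  mul_mem (mul_mem (mulE_memD d _) (cOpE_memD d q)) (mulE_memD d t)

/-- The annihilator ideal `𝔄^∨ = {T ∈ Aₙ(ℂ) : T ∘ τ(x) ∈ Aₙ(ℂ)·q(∂)}` of
`e^∨ = τ + D·q(∂)`, viewed inside `D_τ`. -/
def AnnSet {n : ℕ} {τ : Rn n} (d : Fin n → ES n τ) (q : Rn n) : Set ↥(DtauAlg d) :=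
  {T | ((T : ES n τ) ∈ WeylInS d) ∧
    ∃ A ∈ WeylInS d,
      (T : ES n τ) * mulE (algebraMap (Rn n) (Sloc n τ) τ) = A * cOpE d q}

section AuxLemmas

variable {n : ℕ} {τ : Rn n}

lemma mulE_mul (a b : Sloc n τ) : mulE (a * b) = mulE a * mulE b :=
  LinearMap.ext fun f => by
    simp [mulE, Module.End.mul_apply, LinearMap.mulLeft_apply, mul_assoc]

lemma mulE_one : (mulE (1 : Sloc n τ)) = 1 :=
  LinearMap.ext fun f => by simp [mulE, LinearMap.mulLeft_apply]

lemma mulE_addE (a b : Sloc n τ) : mulE (a + b) = mulE a + mulE b :=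
  LinearMap.ext fun f => by
    simp [mulE, LinearMap.add_apply, LinearMap.mulLeft_apply, add_mul]

lemma mulE_comm (a b : Sloc n τ) : mulE a * mulE b = mulE b * mulE a := by
  rw [← mulE_mul, ← mulE_mul, mul_comm]

variable (d : Fin n → ES n τ)

lemma d_memW (i : Fin n) : d i ∈ WeylInS d :=
  Algebra.subset_adjoin (Set.mem_union_left _ (Set.mem_range_self i))

lemma mulW_memW (r : Rn n) : mulE (algebraMap (Rn n) (Sloc n τ) r) ∈ WeylInS d :=
  Algebra.subset_adjoin (Set.mem_union_right _ ⟨r, rfl⟩)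

lemma cOpE_memW (q : Rn n) : cOpE d q ∈ WeylInS d := by
  apply Subalgebra.sum_mem
  intro m _
  apply Subalgebra.smul_mem
  apply Subalgebra.list_prod_mem
  intro x hx
  simp only [List.mem_map] at hx
  obtain ⟨i, -, rfl⟩ := hx
  exact pow_mem (d_memW d i) _

lemma weyl_le_dtau : WeylInS d ≤ DtauAlg d := by
  apply Algebra.adjoin_mono
  apply Set.union_subset_union_right
  rintro x ⟨r, rfl⟩
  exact ⟨_, rfl⟩

variable (hLeib : ∀ (i : Fin n) (a b : Sloc n τ), d i (a * b) = a * d i b + d i a * b)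

include hLeib

lemma d_one (i : Fin n) : d i (1 : Sloc n τ) = 0 := by
  have h := hLeib i 1 1
  simp only [mul_one, one_mul] at h
  -- h : d i 1 = d i 1 + d i 1
  have : d i (1 : Sloc n τ) + 0 = d i 1 + d i 1 := by rw [add_zero]; exact h
  exact (add_left_cancel this).symm

lemma d_mulE (i : Fin n) (s : Sloc n τ) :
    d i * mulE s = mulE s * d i + mulE (d i s) := by
  apply LinearMap.ext
  intro f
  simp only [Module.End.mul_apply, LinearMap.add_apply, mulE, LinearMap.mulLeft_apply]
  rw [hLeib]

lemma d_pow_apply (i : Fin n) (a : Sloc n τ) :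
    ∀ k : ℕ, d i (a ^ (k + 1)) = (k + 1) • (a ^ k * d i a) := by
  intro k
  induction k with
  | zero => simp
  | succ k ih =>
    have h2 : a ^ (k + 2) = a * a ^ (k + 1) := by ring
    rw [h2, hLeib, ih]
    ring

variable (hcomp : ∀ (i : Fin n) (r : Rn n),
      d i (algebraMap (Rn n) (Sloc n τ) r) = algebraMap (Rn n) (Sloc n τ) (pderiv i r))
variable (t : Sloc n τ) (ht : algebraMap (Rn n) (Sloc n τ) τ * t = 1)

include hcomp ht

lemma d_t (i : Fin n) :
    d i t = -(t * t * algebraMap (Rn n) (Sloc n τ) (pderiv i τ)) := by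
  set aτ := algebraMap (Rn n) (Sloc n τ) τ with haτ
  have h0 : d i (aτ * t) = 0 := by rw [ht]; exact d_one d hLeib i
  rw [hLeib, hcomp] at h0
  have h1 : aτ * d i t = -(algebraMap (Rn n) (Sloc n τ) (pderiv i τ) * t) :=
    eq_neg_of_add_eq_zero_left h0
  have h2 : t * (aτ * d i t) = d i t := by
    rw [← mul_assoc, mul_comm t aτ, ht, one_mul]
  rw [h1] at h2
  rw [← h2]; ring

lemma d_t_pow (i : Fin n) (k : ℕ) :
    d i (t ^ (k + 1)) =
      t ^ (k + 2) * algebraMap (Rn n) (Sloc n τ) (-((k + 1) • pderiv i τ)) := by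
  rw [d_pow_apply d hLeib i t k, d_t d hLeib hcomp t ht i, map_neg, map_nsmul]
  push_cast
  ring

/-- key inductive step : multiplying a "good" operator by `d i` on the left. -/
lemma good_step (i : Fin n) (k : ℕ) (P W : ES n τ) (hW : W ∈ WeylInS d)
    (h : P * mulE t = mulE (t ^ (k + 1)) * W) :
    ∃ W' ∈ WeylInS d, (d i * P) * mulE t = mulE (t ^ (k + 2)) * W' := by
  set aτ := algebraMap (Rn n) (Sloc n τ) τ with haτ
  refine ⟨mulE aτ * (d i * W) +
    mulE (algebraMap (Rn n) (Sloc n τ) (-((k + 1) • pderiv i τ))) * W,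
    add_mem (mul_mem (mulW_memW d τ) (mul_mem (d_memW d i) hW))
      (mul_mem (mulW_memW d _) hW), ?_⟩
  have hsplit : mulE (t ^ (k + 1) : Sloc n τ) = mulE (t ^ (k + 2)) * mulE aτ := by
    rw [← mulE_mul]
    congr 1
    calc t ^ (k + 1) = t ^ (k + 1) * (aτ * t) := by rw [ht, mul_one]
      _ = t ^ (k + 2) * aτ := by ring
  calc (d i * P) * mulE t = d i * (mulE (t ^ (k + 1)) * W) := by rw [mul_assoc, h]
    _ = (d i * mulE (t ^ (k + 1))) * W := by rw [mul_assoc]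
    _ = (mulE (t ^ (k + 1)) * d i + mulE (d i (t ^ (k + 1)))) * W := by
        rw [d_mulE d hLeib]
    _ = mulE (t ^ (k + 1)) * (d i * W) + mulE (d i (t ^ (k + 1))) * W := by
        rw [add_mul, mul_assoc]
    _ = mulE (t ^ (k + 2)) * (mulE aτ * (d i * W)) +
        mulE (t ^ (k + 2)) *
          (mulE (algebraMap (Rn n) (Sloc n τ) (-((k + 1) • pderiv i τ))) * W) := by
        rw [hsplit, d_t_pow d hLeib hcomp t ht, mulE_mul]
        simp only [mul_assoc]
    _ = _ := by rw [← mul_add]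

lemma good_mono (k : ℕ) (P W : ES n τ) (hW : W ∈ WeylInS d)
    (h : P * mulE t = mulE (t ^ (k + 1)) * W) :
    ∃ W' ∈ WeylInS d, P * mulE t = mulE (t ^ (k + 2)) * W' := by
  set aτ := algebraMap (Rn n) (Sloc n τ) τ with haτ
  refine ⟨mulE aτ * W, mul_mem (mulW_memW d τ) hW, ?_⟩
  have hsplit : mulE (t ^ (k + 1) : Sloc n τ) = mulE (t ^ (k + 2)) * mulE aτ := by
    rw [← mulE_mul]
    congr 1
    calc t ^ (k + 1) = t ^ (k + 1) * (aτ * t) := by rw [ht, mul_one]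
      _ = t ^ (k + 2) * aτ := by ring
  rw [h, hsplit, mul_assoc]

lemma good_le (k N : ℕ) (hkN : k ≤ N) (P W : ES n τ) (hW : W ∈ WeylInS d)
    (h : P * mulE t = mulE (t ^ (k + 1)) * W) :
    ∃ W' ∈ WeylInS d, P * mulE t = mulE (t ^ (N + 1)) * W' := by
  induction N with
  | zero =>
    obtain rfl : k = 0 := Nat.le_zero.mp hkN
    exact ⟨W, hW, h⟩
  | succ N ih =>
    rcases Nat.lt_or_ge k (N + 1) with hlt | hge
    · obtain ⟨W', hW', h'⟩ := ih (Nat.lt_succ_iff.mp hlt)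
      exact good_mono d hLeib hcomp t ht N P W' hW' h'
    · obtain rfl : k = N + 1 := le_antisymm hkN hge
      exact ⟨W, hW, h⟩

lemma good_pow (i : Fin n) (j k : ℕ) (P W : ES n τ) (hW : W ∈ WeylInS d)
    (h : P * mulE t = mulE (t ^ (k + 1)) * W) :
    ∃ W' ∈ WeylInS d, (d i ^ j * P) * mulE t = mulE (t ^ (j + k + 1)) * W' := by
  induction j with
  | zero => simpa using ⟨W, hW, h⟩
  | succ j ih =>
    obtain ⟨W', hW', h'⟩ := ih
    have := good_step d hLeib hcomp t ht i (j + k) (d i ^ j * P) W' hW' h'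
    obtain ⟨W'', hW'', h''⟩ := this
    refine ⟨W'', hW'', ?_⟩
    have hsw : d i ^ (j + 1) * P = d i * (d i ^ j * P) := by rw [pow_succ', mul_assoc]
    rw [hsw, show j + 1 + k + 1 = j + k + 2 from by omega]
    exact h''

lemma good_list (m : Fin n →₀ ℕ) :
    ∀ L : List (Fin n),
      ∃ W ∈ WeylInS d,
        ((L.map (fun i => d i ^ m i)).prod) * mulE t =
          mulE (t ^ ((L.map fun i => m i).sum + 1)) * W := by
  intro L
  induction L with
  | nil =>
    refine ⟨1, one_mem _, ?_⟩
    simp [pow_one]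
  | cons i L ih =>
    obtain ⟨W, hW, h⟩ := ih
    obtain ⟨W', hW', h'⟩ :=
      good_pow d hLeib hcomp t ht i (m i) ((L.map fun i => m i).sum)
        ((L.map (fun i => d i ^ m i)).prod) W hW h
    refine ⟨W', hW', ?_⟩
    simpa [mul_assoc] using h'

lemma good_cOp (q : Rn n) :
    ∃ W ∈ WeylInS d,
      cOpE d q * mulE t = mulE (t ^ (q.totalDegree + 1)) * W := by
  classical
  set N := q.totalDegree with hN
  have key : ∀ m : {x // x ∈ q.support},
      ∃ W ∈ WeylInS d,
        (((List.finRange n).map (fun i => d i ^ (m : Fin n →₀ ℕ) i)).prod) * mulE t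
          = mulE (t ^ (N + 1)) * W := by
    rintro ⟨m, hm⟩
    obtain ⟨W, hW, h⟩ := good_list d hLeib hcomp t ht m (List.finRange n)
    have hdeg : (((List.finRange n).map fun i => m i).sum) ≤ N := by
      have h1 : (((List.finRange n).map fun i => m i).sum) = ∑ i : Fin n, m i :=
        (Fin.sum_univ_def fun i => m i).symm
      have h2 : (m.sum fun _ e => e) = ∑ i : Fin n, m i :=
        Finsupp.sum_fintype m (fun _ e => e) fun _ => rfl
      rw [h1, ← h2, hN]
      exact MvPolynomial.le_totalDegree hm
    exact good_le d hLeib hcomp t ht _ N hdeg _ W hW h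
  choose W hW1 hW2 using key
  refine ⟨∑ m ∈ q.support.attach, q.coeff m • W m,
    Subalgebra.sum_mem _ fun m _ => Subalgebra.smul_mem _ (hW1 m) _, ?_⟩
  rw [cOpE, Finset.sum_mul]
  rw [← Finset.sum_attach q.support
    (fun m => (q.coeff m • ((List.finRange n).map (fun i => d i ^ m i)).prod) * mulE t)]
  rw [Finset.mul_sum]
  apply Finset.sum_congr rfl
  intro m _
  rw [smul_mul_assoc, hW2 m, mul_smul_comm]

end AuxLemmas

/-- Let `q ∈ ℂ[x]` be irreducible and `τ ∈ ℂ[x]`. The extension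
`𝔄_τ^∨ = D_τ·𝔄^∨` of the annihilator ideal `𝔄^∨` in the localization `D_τ` of the Weyl
algebra at `τ` is a principal left ideal, generated by `D := τ(x) ∘ q(∂) ∘ τ(x)⁻¹`. -/
theorem extension_ideal_principal (n : ℕ) (τ q : Rn n) (hq : Irreducible q)
    (d : Fin n → ES n τ)
    (hLeib : ∀ (i : Fin n) (a b : Sloc n τ), d i (a * b) = a * d i b + d i a * b)
    (hcomp : ∀ (i : Fin n) (r : Rn n),
      d i (algebraMap (Rn n) (Sloc n τ) r) = algebraMap (Rn n) (Sloc n τ) (pderiv i r))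
    (t : Sloc n τ) (ht : algebraMap (Rn n) (Sloc n τ) τ * t = 1) :
    Ideal.span (AnnSet d q) =
      Ideal.span ({⟨DarbouxOp τ d q t, DarbouxOp_memD d q t⟩} : Set ↥(DtauAlg d)) := by
  classical
  set aτ := algebraMap (Rn n) (Sloc n τ) τ with haτ
  have hinv1 : mulE aτ * mulE t = (1 : ES n τ) := by rw [← mulE_mul, ht, mulE_one]
  have hinv2 : mulE t * mulE aτ = (1 : ES n τ) := by
    rw [← mulE_mul, mul_comm, ht, mulE_one]
  apply le_antisymm
  · -- span (AnnSet d q) ≤ span {D}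
    rw [Ideal.span_le]
    rintro T ⟨hTW, A, hA, hTA⟩
    have hD : (T : ES n τ) = (A * mulE t) * DarbouxOp τ d q t := by
      have h0 : (T : ES n τ) = (T : ES n τ) * mulE aτ * mulE t := by
        rw [mul_assoc, hinv1, mul_one]
      rw [h0, hTA, DarbouxOp, ← haτ]
      calc A * cOpE d q * mulE t
          = A * ((mulE t * mulE aτ) * (cOpE d q * mulE t)) := by
            rw [hinv2, one_mul, mul_assoc]
        _ = (A * mulE t) * (mulE aτ * cOpE d q * mulE t) := by
            simp only [mul_assoc]
    have hT : T = (⟨A * mulE t,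
        mul_mem (weyl_le_dtau d hA) (mulE_memD d t)⟩ : ↥(DtauAlg d)) *
        ⟨DarbouxOp τ d q t, DarbouxOp_memD d q t⟩ := by
      apply Subtype.ext
      exact hD
    rw [SetLike.mem_coe, hT]
    exact Ideal.mul_mem_left _ _ (Ideal.subset_span rfl)
  · -- span {D} ≤ span (AnnSet d q)
    rw [Ideal.span_le, Set.singleton_subset_iff]
    obtain ⟨Wq, hWq, hgood⟩ := good_cOp d hLeib hcomp t ht q
    set N := q.totalDegree with hNdef
    have hone : mulE ((aτ) ^ (N + 1)) * mulE (t ^ (N + 1)) = (1 : ES n τ) := by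
      rw [← mulE_mul, ← mul_pow, ht, one_pow, mulE_one]
    have hWann : (⟨Wq, weyl_le_dtau d hWq⟩ : ↥(DtauAlg d)) ∈ AnnSet d q := by
      refine ⟨hWq, mulE (algebraMap (Rn n) (Sloc n τ) (τ ^ (N + 1))),
        mulW_memW d _, ?_⟩
      have hmap : mulE (algebraMap (Rn n) (Sloc n τ) (τ ^ (N + 1))) =
          mulE ((aτ) ^ (N + 1)) := by rw [map_pow, haτ]
      rw [hmap]
      calc Wq * mulE aτ
          = (mulE ((aτ) ^ (N + 1)) * mulE (t ^ (N + 1))) * Wq * mulE aτ := by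
            rw [hone, one_mul]
        _ = mulE ((aτ) ^ (N + 1)) * (mulE (t ^ (N + 1)) * Wq) * mulE aτ := by
            simp only [mul_assoc]
        _ = mulE ((aτ) ^ (N + 1)) * (cOpE d q * mulE t) * mulE aτ := by
            rw [hgood]
        _ = mulE ((aτ) ^ (N + 1)) * (cOpE d q * (mulE t * mulE aτ)) := by
            simp only [mul_assoc]
        _ = mulE ((aτ) ^ (N + 1)) * cOpE d q := by rw [hinv2, mul_one]
    have hDeq : DarbouxOp τ d q t = mulE (t ^ N) * Wq := by
      rw [DarbouxOp, ← haτ]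
      calc mulE aτ * cOpE d q * mulE t
          = mulE aτ * (cOpE d q * mulE t) := by rw [mul_assoc]
        _ = mulE aτ * (mulE (t ^ (N + 1)) * Wq) := by rw [hgood]
        _ = (mulE aτ * mulE (t ^ (N + 1))) * Wq := by rw [mul_assoc]
        _ = mulE (t ^ N) * Wq := by
            rw [← mulE_mul]
            congr 2
            calc aτ * t ^ (N + 1) = (aτ * t) * t ^ N := by ring
              _ = t ^ N := by rw [ht, one_mul]
    have hDfact : (⟨DarbouxOp τ d q t, DarbouxOp_memD d q t⟩ : ↥(DtauAlg d)) =
        (⟨mulE (t ^ N), mulE_memD d _⟩ : ↥(DtauAlg d)) * ⟨Wq, weyl_le_dtau d hWq⟩ := by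
      apply Subtype.ext
      exact hDeq
    rw [SetLike.mem_coe, hDfact]
    exact Ideal.mul_mem_left _ _ (Ideal.subset_span hWann)
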